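/- In the semidirect product A ⋊ U, for any a ∈ A: Ē·a·E = ⟨a⟩_tr · δ^L_A · E, where ⟨a⟩_tr = ⟨S²(e_i), f^i a⟩ and δ^L_A := Σ_n f^n ⟨e_n S²(e_i), f^i ·⟩ is the left delta function in A; explicitly Ē a E = Σ_{n,i} f^n ⟨e_n S²(e_i), f^i a⟩ E. -/

import Mathlib

open TensorProduct

/-- A pair of dually paired finite-dimensional Hopf algebras `U` (enveloping-algebra type) and
`A` (function-algebra type) over a field `k`, with a nondegenerate pairing realized by finite
dual bases `{e i} ⊂ U`, `{f i} ⊂ A`, and invertible antipodes. -/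
structure PairedHopf (k U A : Type*) (ι : Type*) [Field k] [Ring U] [Ring A]
    [HopfAlgebra k U] [HopfAlgebra k A] [Fintype ι] [DecidableEq ι] where
  pair : U →ₗ[k] A →ₗ[k] k
  pair_mul_left : ∀ (x y : U) (a : A), pair (x * y) a =
    (LinearMap.mul' k k ∘ₗ TensorProduct.map (pair x) (pair y)) (Coalgebra.comul (R := k) a)
  pair_mul_right : ∀ (x : U) (a b : A), pair x (a * b) =
    (LinearMap.mul' k k ∘ₗ TensorProduct.map (pair.flip a) (pair.flip b))
      (Coalgebra.comul (R := k) x)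
  pair_antipode : ∀ (x : U) (a : A),
    pair (HopfAlgebra.antipode (R := k) x) a = pair x (HopfAlgebra.antipode (R := k) a)
  pair_one_left : ∀ a : A, pair 1 a = Coalgebra.counit (R := k) a
  pair_one_right : ∀ x : U, pair x 1 = Coalgebra.counit (R := k) x
  SinvU : U →ₗ[k] U
  SinvA : A →ₗ[k] A
  SinvU_antipode : ∀ x : U, SinvU (HopfAlgebra.antipode (R := k) x) = x
  antipode_SinvU : ∀ x : U, HopfAlgebra.antipode (R := k) (SinvU x) = x
  SinvA_antipode : ∀ a : A, SinvA (HopfAlgebra.antipode (R := k) a) = a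
  antipode_SinvA : ∀ a : A, HopfAlgebra.antipode (R := k) (SinvA a) = a
  e : ι → U
  f : ι → A
  pair_basis : ∀ i j, pair (e i) (f j) = if i = j then 1 else 0
  expand_U : ∀ x : U, ∑ i, pair x (f i) • e i = x
  expand_A : ∀ a : A, ∑ i, pair (e i) a • f i = a

open TensorProduct in
/-- The right-hand side `a₍₁₎ ⟨x₍₁₎, a₍₂₎⟩ x₍₂₎` of the cross relation in the semidirect
product `A ⋊ U`, as a linear map `U ⊗ A → H` (where `ιA`, `ιU` embed `A`, `U` into `H`). -/
noncomputable def crossRHS {k U A H : Type*} [Field k] [Ring U] [Ring A] [Ring H]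
    [HopfAlgebra k U] [HopfAlgebra k A] [Algebra k H]
    (pair : U →ₗ[k] A →ₗ[k] k) (ιA : A →ₐ[k] H) (ιU : U →ₐ[k] H) :
    U ⊗[k] A →ₗ[k] H :=
  (TensorProduct.lid k H).toLinearMap
    ∘ₗ TensorProduct.map (TensorProduct.lift pair)
        (TensorProduct.lift (LinearMap.mk₂ k (fun x a => ιA a * ιU x)
          (fun x y a => by simp [mul_add])
          (fun c x a => by simp [mul_smul_comm])
          (fun x a b => by simp [add_mul])
          (fun c x a => by simp [smul_mul_assoc])))
    ∘ₗ (TensorProduct.tensorTensorTensorComm k U U A A).toLinearMap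
    ∘ₗ TensorProduct.map LinearMap.id (TensorProduct.comm k A A).toLinearMap
    ∘ₗ TensorProduct.map (Coalgebra.comul (R := k)) (Coalgebra.comul (R := k))

/-!
The vacuum projector absorbs `U`: `x E = ε(x) E`. To see this, write `E = fᵐ S⁻¹(eₘ)`; the cross
relation turns `x E` into `fᵐ x₂ S⁻¹(x₁) S⁻¹(eₘ)`, and `x₂ S⁻¹(x₁) = ε(x)` is the antipode axiom
transported by the anti-automorphism `S⁻¹`. Consequently, for `x ∈ U` and `b ∈ A`,
`x b E = b₁ ⟨x₁, b₂⟩ ε(x₂) E = ⟨eₙ x, b⟩ fⁿ E`; taking `x = S²(eᵢ)`, `b = fⁱ a` and summing over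
`i` gives the claim. All coproducts are expanded in the dual bases, so every identity is an
identity of finite sums.
-/

namespace TensorProduct

variable {R V W ι κ : Type*} [CommSemiring R] [AddCommMonoid V] [AddCommMonoid W]
  [Module R V] [Module R W] [Fintype ι] [Fintype κ]

theorem sum_sum_dual_smul_tmul_eq_self (φ : ι → V →ₗ[R] R) (b : ι → V)
    (hb : ∀ v, ∑ i, φ i v • b i = v) (ψ : κ → W →ₗ[R] R) (c : κ → W)
    (hc : ∀ w, ∑ j, ψ j w • c j = w) (z : V ⊗[R] W) :
    ∑ i, ∑ j, LinearMap.mul' R R (map (φ i) (ψ j) z) • (b i ⊗ₜ[R] c j) = z := by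
  induction z using TensorProduct.induction_on with
  | zero => simp
  | tmul v w =>
    simp only [map_tmul, LinearMap.mul'_apply, ← smul_tmul_smul, ← tmul_sum, ← sum_tmul, hb, hc]
  | add x y hx hy => simp only [map_add, add_smul, Finset.sum_add_distrib, hx, hy]

end TensorProduct

namespace PairedHopf

open HopfAlgebra TensorProduct
open Coalgebra (comul counit)

variable {k U A ι : Type*} [Field k] [Ring U] [Ring A]
    [HopfAlgebra k U] [HopfAlgebra k A] [Fintype ι] [DecidableEq ι]
    (P : PairedHopf k U A ι)

theorem comul_A_eq_sum (b : A) :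
    comul (R := k) b = ∑ m, ∑ l, P.pair (P.e m * P.e l) b • (P.f m ⊗ₜ[k] P.f l) := by
  conv_lhs => rw [← sum_sum_dual_smul_tmul_eq_self (fun m ↦ P.pair (P.e m)) P.f P.expand_A
    (fun m ↦ P.pair (P.e m)) P.f P.expand_A (comul b)]
  simp only [P.pair_mul_left, LinearMap.comp_apply]

theorem comul_U_eq_sum (x : U) :
    comul (R := k) x = ∑ m, ∑ l, P.pair x (P.f m * P.f l) • (P.e m ⊗ₜ[k] P.e l) := by
  conv_lhs => rw [← sum_sum_dual_smul_tmul_eq_self (fun m ↦ P.pair.flip (P.f m)) P.e P.expand_U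
    (fun m ↦ P.pair.flip (P.f m)) P.e P.expand_U (comul x)]
  simp only [P.pair_mul_right, LinearMap.comp_apply]

theorem pair_SinvA (u : U) (b : A) : P.pair u (P.SinvA b) = P.pair (P.SinvU u) b := by
  simpa only [P.antipode_SinvU, P.antipode_SinvA] using P.pair_antipode (P.SinvU u) (P.SinvA b)

theorem SinvU_mul (x y : U) : P.SinvU (x * y) = P.SinvU y * P.SinvU x := by
  conv_lhs => rw [← P.antipode_SinvU x, ← P.antipode_SinvU y, ← antipode_mul_antidistrib,
    P.SinvU_antipode]

theorem sum_pair_SinvA_smul (u : U) : ∑ j, P.pair u (P.SinvA (P.f j)) • P.e j = P.SinvU u := by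
  simp only [pair_SinvA, P.expand_U]

theorem sum_pair_mul_counit (x : U) (a : A) :
    ∑ s, P.pair x (a * P.f s) * counit (R := k) (P.e s) = P.pair x a := by
  conv_rhs => rw [← mul_one a, ← P.expand_A 1]
  simp only [P.pair_one_right, Finset.mul_sum, mul_smul_comm, map_sum, map_smul, smul_eq_mul,
    mul_comm]

theorem sum_pair_mul_pair (x y : U) (b : A) :
    ∑ l, P.pair (y * P.e l) b * P.pair x (P.f l) = P.pair (y * x) b := by
  conv_rhs => rw [← P.expand_U x]
  simp only [Finset.mul_sum, mul_smul_comm, map_sum, map_smul, LinearMap.sum_apply,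
    LinearMap.smul_apply, smul_eq_mul, mul_comm]

theorem sum_smul_mul_SinvU (x : U) :
    ∑ l, ∑ s, P.pair x (P.f l * P.f s) • (P.e s * P.SinvU (P.e l)) = counit (R := k) x • 1 := by
  have hS : Function.Injective (antipode k (A := U)) :=
    Function.LeftInverse.injective P.SinvU_antipode
  apply hS
  have hcounit := mul_antipode_lTensor_comul_apply (R := k) x
  rw [P.comul_U_eq_sum] at hcounit
  simpa [antipode_mul_antidistrib, P.antipode_SinvU, Algebra.algebraMap_eq_smul_one] using hcounit

variable {H : Type*} [Ring H] [Algebra k H] (ιA : A →ₐ[k] H) (ιU : U →ₐ[k] H)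

theorem crossRHS_tmul_eq_sum (x : U) (a : A) :
    crossRHS P.pair ιA ιU (x ⊗ₜ[k] a) = ∑ m, ∑ l, ∑ s,
      (P.pair (P.e m * P.e l) a * P.pair x (P.f l * P.f s)) • (ιA (P.f m) * ιU (P.e s)) := by
  simp only [crossRHS, LinearMap.comp_apply, map_tmul, P.comul_U_eq_sum, P.comul_A_eq_sum]
  simp only [sum_tmul, tmul_sum, smul_tmul, tmul_smul, map_sum, map_smul, comm_tmul,
    tensorTensorTensorComm_tmul, map_tmul, lift.tmul, LinearMap.mk₂_apply, lid_tmul, P.pair_basis,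
    LinearEquiv.coe_coe, LinearMap.id_coe, id_eq]
  simp only [ite_smul, one_smul, zero_smul, smul_ite, smul_zero, Finset.sum_ite_irrel,
    Finset.sum_const_zero, Finset.sum_ite_eq', Finset.mem_univ, if_true, Finset.smul_sum, smul_smul]

def vacuum : H := ∑ i, ιA (P.SinvA (P.f i)) * ιU (P.e i)

theorem sum_mul_SinvU_eq_vacuum :
    ∑ m, ιA (P.f m) * ιU (P.SinvU (P.e m)) = P.vacuum ιA ιU := by
  simp only [← P.sum_pair_SinvA_smul, map_sum, map_smul, Finset.mul_sum, mul_smul_comm]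
  rw [Finset.sum_comm]
  simp only [vacuum, ← smul_mul_assoc, ← Finset.sum_mul, ← map_smul, ← map_sum, P.expand_A]

variable {ιA ιU}

theorem mul_vacuum
    (hcross : ∀ (x : U) (a : A), ιU x * ιA a = crossRHS P.pair ιA ιU (x ⊗ₜ[k] a))
    (x : U) : ιU x * P.vacuum ιA ιU = counit (R := k) x • P.vacuum ιA ιU := by
  calc ιU x * P.vacuum ιA ιU
      = ∑ j, ∑ m, ∑ l, ∑ s,
          (P.pair (P.e m * P.e l) (P.SinvA (P.f j)) * P.pair x (P.f l * P.f s)) •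
            (ιA (P.f m) * ιU (P.e s * P.e j)) := by
        simp only [vacuum, Finset.mul_sum, ← mul_assoc, hcross, crossRHS_tmul_eq_sum,
          Finset.sum_mul, smul_mul_assoc, map_mul]
    _ = ∑ m, ∑ l, ∑ s, P.pair x (P.f l * P.f s) •
          (ιA (P.f m) * ιU (P.e s * P.SinvU (P.e m * P.e l))) := by
        rw [Finset.sum_comm]
        refine Finset.sum_congr rfl fun m _ => ?_
        rw [Finset.sum_comm]
        refine Finset.sum_congr rfl fun l _ => ?_
        rw [Finset.sum_comm]
        refine Finset.sum_congr rfl fun s _ => ?_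
        simp only [← P.sum_pair_SinvA_smul, Finset.mul_sum, map_sum, mul_smul_comm, map_smul,
          Finset.smul_sum, smul_smul, mul_comm]
    _ = ∑ m, ιA (P.f m) *
          ιU ((∑ l, ∑ s, P.pair x (P.f l * P.f s) • (P.e s * P.SinvU (P.e l))) *
            P.SinvU (P.e m)) := by
        simp only [P.SinvU_mul, Finset.sum_mul, Finset.mul_sum, map_sum, smul_mul_assoc,
          mul_assoc, map_smul, mul_smul_comm]
    _ = counit (R := k) x • P.vacuum ιA ιU := by
        simp only [P.sum_smul_mul_SinvU, smul_mul_assoc, one_mul, map_smul, mul_smul_comm,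
          ← Finset.smul_sum, sum_mul_SinvU_eq_vacuum]

theorem mul_mul_vacuum
    (hcross : ∀ (x : U) (a : A), ιU x * ιA a = crossRHS P.pair ιA ιU (x ⊗ₜ[k] a))
    (x : U) (b : A) :
    ιU x * ιA b * P.vacuum ιA ιU = ∑ n, P.pair (P.e n * x) b • (ιA (P.f n) * P.vacuum ιA ιU) := by
  calc ιU x * ιA b * P.vacuum ιA ιU
      = ∑ n, ∑ l, ∑ s,
          (P.pair (P.e n * P.e l) b * P.pair x (P.f l * P.f s) * counit (R := k) (P.e s)) •
            (ιA (P.f n) * P.vacuum ιA ιU) := by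
        simp only [hcross, crossRHS_tmul_eq_sum, Finset.sum_mul, smul_mul_assoc, mul_assoc,
          P.mul_vacuum hcross, mul_smul_comm, smul_smul]
    _ = ∑ n, P.pair (P.e n * x) b • (ιA (P.f n) * P.vacuum ιA ιU) := by
        refine Finset.sum_congr rfl fun n _ => ?_
        simp only [← Finset.sum_smul, mul_assoc, ← Finset.mul_sum, P.sum_pair_mul_counit,
          P.sum_pair_mul_pair]

end PairedHopf

open Coalgebra HopfAlgebra in
/-- In the semidirect product `A ⋊ U`, for any `a ∈ A`:
`Ē a E = (∑ n i, ⟨e n * S²(e i), f i * a⟩ f n) E`, i.e. `Ē a E` equals the left delta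
function `δ^L_A` evaluated at the trace integral of `a`, times `E`. -/
theorem Ebar_a_E_eq_trace_delta
    {k U A H ι : Type*} [Field k] [Ring U] [Ring A] [Ring H]
    [HopfAlgebra k U] [HopfAlgebra k A] [Algebra k H] [Fintype ι] [DecidableEq ι]
    (P : PairedHopf k U A ι) (ιA : A →ₐ[k] H) (ιU : U →ₐ[k] H)
    (hcross : ∀ (x : U) (a : A),
      ιU x * ιA a = crossRHS P.pair ιA ιU (x ⊗ₜ[k] a)) :
    ∀ a : A,
      (∑ i, ιU (antipode (R := k) (antipode (R := k) (P.e i))) * ιA (P.f i)) * ιA a *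
          (∑ i, ιA (P.SinvA (P.f i)) * ιU (P.e i)) =
        ∑ n, ∑ i, P.pair (P.e n * antipode (R := k) (antipode (R := k) (P.e i))) (P.f i * a) •
          (ιA (P.f n) * (∑ j, ιA (P.SinvA (P.f j)) * ιU (P.e j))) := by
  intro a
  calc _ = ∑ i, ιU (antipode k (antipode k (P.e i))) * ιA (P.f i * a) * P.vacuum ιA ιU := by
        simp only [PairedHopf.vacuum, Finset.sum_mul, mul_assoc, map_mul]
    _ = _ := by
        simp only [P.mul_mul_vacuum hcross]
        exact Finset.sum_comm
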